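/- Let d = 1, T = 2, R(z) = |z| (so ∂R(0) = [−1,1]), E(z) = (1/2)z² − z, z₀ = 0, and for n ∈ ℕ, n ≥ 1, let ℓ_n : [0,2] → ℝ be given by ℓ_n(t) = 0 for t ∈ [0,1], ℓ_n(t) = (n/2)(t−1) for t ∈ (1, 1+1/n), ℓ_n(t) = 1/2 for t ∈ [1+1/n, 2]. Define S_n = 5/2 and, for s ∈ [0, 5/2]: ẑ_n(s) = 0 on [0,1], ẑ_n(s) = (n/(n+2))(s−1) on (1, 3/2 + 1/n), ẑ_n(s) = 1/2 on [3/2 + 1/n, 5/2]; t̂_n(s) = s on [0,1], t̂_n(s) = (2s + n)/(n+2) on (1, 3/2 + 1/n), t̂_n(s) = s − 1/2 on [3/2 + 1/n, 5/2]; and ℓ̂_n(s) = ℓ_n(t̂_n(s)), i.e. ℓ̂_n = 0 on [0,1], ℓ̂_n(s) = (n/(n+2))(s−1) on (1, 3/2 + 1/n), ℓ̂_n = 1/2 on [3/2 + 1/n, 5/2]. Then (S_n, t̂_n, ẑ_n, ℓ̂_n) satisfies all conditions (2.1)–(2.5) with D_zÎ_n(s,z) = z − 1 − ℓ̂_n(s),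 i.e. it is a normalized p-parametrized BV solution associated with ℓ_n. (Section 2.1) -/

import Mathlib

/-!
For `n ≥ 1` the reparametrized load `ℓ̂ₙ = ℓₙ ∘ t̂ₙ` coincides with `ẑₙ`, so `-D_zÎ ≡ 1` lies in
`∂R(0) = [-1, 1]` and every `dist` term vanishes: (2.2)–(2.3) reduce to `t̂ₙ' ≥ 0` and
`t̂ₙ' + ẑₙ' = 1`, and (2.4) is the chain rule `∫ (ẑₙ - 1) ẑₙ' = E(ẑₙ(s₂)) - E(ẑₙ(s₁))`.
The functions `t̂ₙ`, `ẑₙ` are continuous and piecewise affine with kinks only at `1` and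
`3/2 + 1/n`; the fundamental theorem of calculus off this finite set gives both (2.4) and the
Lipschitz bounds. As `ℓₙ` is continuous, both one-sided limits are `ℓₙ` itself, and (2.5) holds
with any `s*` in `t̂ₙ⁻¹(t*)`, which exists by the intermediate value theorem.
-/

open MeasureTheory Set Filter
open scoped Topology NNReal

noncomputable section

/-- `dist(η, [-1,1]) = max(|η| - 1, 0)`, the distance to `∂R(0)` for `R = |·|`. -/
def dist1 (η : ℝ) : ℝ := max (|η| - 1) 0

/-- The energy `E(z) = z²/2 - z` of the one-dimensional example. -/
def En1 (z : ℝ) : ℝ := (1 / 2) * z ^ 2 - z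

/-- The set `M` where `t̂` is strictly increasing. -/
def Mset (S : ℝ) (that : ℝ → ℝ) : Set ℝ :=
  {s | s ∈ Ioo 0 S ∧ ∀ s₁ ∈ Icc 0 S, ∀ s₂ ∈ Icc 0 S, s₁ < s → s < s₂ → that s₁ < that s₂}

/-- Conditions (2.1)-(2.4) in the one-dimensional example, where `R = |·|` and
`D_zÎ(s,z) = z - 1 - ℓ̂(s)`; `t'`, `z'` denote the a.e. derivatives of `t̂`, `ẑ`. -/
structure Conds1d (T z₀ S : ℝ) (that zhat lhat t' z' : ℝ → ℝ) : Prop where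
  deriv_t : ∀ᵐ s ∂(volume.restrict (Ioo 0 S)), HasDerivAt that (t' s) s
  deriv_z : ∀ᵐ s ∂(volume.restrict (Ioo 0 S)), HasDerivAt zhat (z' s) s
  t_init : that 0 = 0
  t_final : that S = T
  z_init : zhat 0 = z₀
  c22 : ∀ᵐ s ∂(volume.restrict (Ioo 0 S)),
      0 ≤ t' s ∧ t' s * dist1 (-(zhat s - 1 - lhat s)) = 0
  c23 : ∀ᵐ s ∂(volume.restrict (Ioo 0 S)),
      t' s + |z' s| + |z' s| * dist1 (-(zhat s - 1 - lhat s)) = 1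
  c24 : ∀ s₁ s₂ : ℝ, 0 ≤ s₁ → s₁ ≤ s₂ → s₂ ≤ S →
      En1 (zhat s₂) +
          (∫ r in s₁..s₂, (|z' r| + |z' r| * dist1 (-(zhat r - 1 - lhat r)))) =
        En1 (zhat s₁) + ∫ r in s₁..s₂, lhat r * z' r

/-- One-sided limits of the load, with the conventions at the endpoints. -/
def OneSided1d (T : ℝ) (l lL lR : ℝ → ℝ) : Prop :=
  (∀ t ∈ Ioc (0 : ℝ) T, Tendsto l (nhdsWithin t (Iio t)) (nhds (lL t))) ∧ lL 0 = l 0 ∧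
    (∀ t ∈ Ico (0 : ℝ) T, Tendsto l (nhdsWithin t (Ioi t)) (nhds (lR t))) ∧ lR T = l T

/-- The compatibility condition (2.5). -/
def Compat1d (T S : ℝ) (that lhat l lL lR : ℝ → ℝ) : Prop :=
  ∀ tstar ∈ Icc (0 : ℝ) T, ∃ sstar ∈ Icc (0 : ℝ) S, that sstar = tstar ∧
    lhat sstar ∈ ({l tstar, lL tstar, lR tstar} : Set ℝ) ∧
    ∀ s ∈ Icc (0 : ℝ) S, that s = tstar →
      (s < sstar → lhat s = lL tstar) ∧ (sstar < s → lhat s = lR tstar)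

/-- The loads of the first counterexample (Section 2.1). -/
def loadn (n : ℕ) (t : ℝ) : ℝ :=
  if t ≤ 1 then 0 else if t < 1 + 1 / (n : ℝ) then ((n : ℝ) / 2) * (t - 1) else 1 / 2

/-- The parametrized time `t̂ₙ` of (2.9). -/
def thatn (n : ℕ) (s : ℝ) : ℝ :=
  if s ≤ 1 then s else if s < 3 / 2 + 1 / (n : ℝ) then (2 * s + (n : ℝ)) / ((n : ℝ) + 2)
  else s - 1 / 2

/-- The parametrized state `ẑₙ` of (2.8). -/
def zhatn (n : ℕ) (s : ℝ) : ℝ :=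
  if s ≤ 1 then 0 else if s < 3 / 2 + 1 / (n : ℝ) then ((n : ℝ) / ((n : ℝ) + 2)) * (s - 1)
  else 1 / 2

/-- The parametrized load `ℓ̂ₙ = ℓₙ ∘ t̂ₙ` of (2.10). -/
def lhatn (n : ℕ) (s : ℝ) : ℝ := loadn n (thatn n s)

/-- The a.e. derivative of `t̂ₙ`. -/
def t'n (n : ℕ) (s : ℝ) : ℝ :=
  if s ≤ 1 then 1 else if s < 3 / 2 + 1 / (n : ℝ) then 2 / ((n : ℝ) + 2) else 1

/-- The a.e. derivative of `ẑₙ`. -/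
def z'n (n : ℕ) (s : ℝ) : ℝ :=
  if s ≤ 1 then 0 else if s < 3 / 2 + 1 / (n : ℝ) then (n : ℝ) / ((n : ℝ) + 2) else 0

section PiecewiseOnLine

variable {a b : ℝ} {f g h : ℝ → ℝ}

theorem continuous_ite_le_ite_lt (hab : a < b) (hf : Continuous f) (hg : Continuous g)
    (hh : Continuous h) (hfg : f a = g a) (hgh : g b = h b) :
    Continuous fun x => if x ≤ a then f x else if x < b then g x else h x := by
  have inner : Continuous fun x => if x < b then g x else h x := by
    simp only [← not_le, ite_not]
    exact hh.if_le hg continuous_const continuous_id fun x hx => by rw [← hx, hgh]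
  refine hf.if_le inner continuous_id continuous_const fun x hx => ?_
  rw [hx, if_pos hab, hfg]

theorem hasDerivAt_ite_le_ite_lt {x f' g' h' : ℝ} (hxa : x ≠ a) (hxb : x ≠ b)
    (hf : HasDerivAt f f' x) (hg : HasDerivAt g g' x) (hh : HasDerivAt h h' x) :
    HasDerivAt (fun y => if y ≤ a then f y else if y < b then g y else h y)
      (if x ≤ a then f' else if x < b then g' else h') x := by
  rcases hxa.lt_or_gt with hxa | hxa
  · rw [if_pos hxa.le]
    refine hf.congr_of_eventuallyEq ?_
    filter_upwards [Iio_mem_nhds hxa] with y hy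
    rw [if_pos (le_of_lt hy)]
  rcases hxb.lt_or_gt with hxb | hxb
  · rw [if_neg hxa.not_ge, if_pos hxb]
    refine hg.congr_of_eventuallyEq ?_
    filter_upwards [Ioo_mem_nhds hxa hxb] with y hy
    rw [if_neg hy.1.not_ge, if_pos hy.2]
  · rw [if_neg hxa.not_ge, if_neg hxb.not_gt]
    refine hh.congr_of_eventuallyEq ?_
    filter_upwards [Ioi_mem_nhds (max_lt hxa hxb)] with y hy
    rw [if_neg (max_lt_iff.1 hy).1.not_ge, if_neg (max_lt_iff.1 hy).2.not_gt]

end PiecewiseOnLine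

theorem intervalIntegrable_of_abs_le {f : ℝ → ℝ} {K : ℝ} (hm : Measurable f)
    (hK : ∀ x, |f x| ≤ K) (a b : ℝ) : IntervalIntegrable f volume a b :=
  intervalIntegrable_const.mono_fun' hm.aestronglyMeasurable (Eventually.of_forall hK)

theorem lipschitzWith_of_hasDerivAt_off_countable {f f' : ℝ → ℝ} {C : Set ℝ} {K : ℝ≥0}
    (hC : C.Countable) (hf : Continuous f) (hd : ∀ x ∉ C, HasDerivAt f (f' x) x)
    (hm : Measurable f') (hK : ∀ x, |f' x| ≤ K) : LipschitzWith K f := by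
  refine LipschitzWith.of_dist_le_mul fun x y => ?_
  have ftc : ∫ r in y..x, f' r = f x - f y :=
    integral_eq_of_hasDerivAt_off_countable f f' hC hf.continuousOn (fun r hr => hd r hr.2)
      (intervalIntegrable_of_abs_le hm hK y x)
  rw [Real.dist_eq, Real.dist_eq, ← ftc]
  exact intervalIntegral.norm_integral_le_of_norm_le_const fun r _ =>
    (Real.norm_eq_abs _).trans_le (hK r)

theorem hasDerivAt_En1 (z : ℝ) : HasDerivAt En1 (z - 1) z := by
  have h := ((hasDerivAt_pow 2 z).const_mul (1 / 2 : ℝ)).sub (hasDerivAt_id' z)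
  exact h.congr_deriv (by norm_num; ring)

theorem integral_sub_one_mul_eq_En1_sub {z z' : ℝ → ℝ} {C : Set ℝ} {a b : ℝ}
    (hC : C.Countable) (hz : Continuous z) (hd : ∀ x ∉ C, HasDerivAt z (z' x) x)
    (hi : IntervalIntegrable z' volume a b) :
    ∫ r in a..b, (z r - 1) * z' r = En1 (z b) - En1 (z a) :=
  integral_eq_of_hasDerivAt_off_countable (fun r => En1 (z r)) _ hC
    (by unfold En1; fun_prop)
    (fun x hx => (hasDerivAt_En1 (z x)).comp x (hd x hx.2))
    (hi.continuousOn_mul (hz.sub continuous_const).continuousOn)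

theorem oneSided1d_of_continuous {T : ℝ} {l : ℝ → ℝ} (hl : Continuous l) :
    OneSided1d T l l l :=
  ⟨fun _ _ => hl.continuousWithinAt.tendsto, rfl, fun _ _ => hl.continuousWithinAt.tendsto, rfl⟩

theorem compat1d_comp {T S : ℝ} {that l : ℝ → ℝ} (hS : 0 ≤ S)
    (ht : ContinuousOn that (Icc 0 S)) (h0 : that 0 = 0) (hT : that S = T) :
    Compat1d T S that (fun s => l (that s)) l l l := by
  intro t htT
  obtain ⟨s, hs, hst⟩ := intermediate_value_Icc hS ht (by rwa [h0, hT])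
  refine ⟨s, hs, hst, by simp [hst], fun r _ hrt => ?_⟩
  simp only [hrt, implies_true, and_self]

namespace FirstCounterexample

variable {n : ℕ}

theorem one_lt_breakpoint (n : ℕ) : (1 : ℝ) < 3 / 2 + 1 / (n : ℝ) := by
  have : (0 : ℝ) ≤ 1 / (n : ℝ) := by positivity
  linarith

theorem breakpoints_countable (n : ℕ) : ({1, 3 / 2 + 1 / (n : ℝ)} : Set ℝ).Countable :=
  (Set.toFinite _).countable

theorem continuous_thatn (hn : 1 ≤ n) : Continuous (thatn n) := by
  have hN : (1 : ℝ) ≤ n := by exact_mod_cast hn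
  refine continuous_ite_le_ite_lt (one_lt_breakpoint n) continuous_id (by fun_prop)
    (by fun_prop) ?_ ?_
  · field_simp; ring
  · field_simp; ring

theorem continuous_zhatn (hn : 1 ≤ n) : Continuous (zhatn n) := by
  have hN : (1 : ℝ) ≤ n := by exact_mod_cast hn
  refine continuous_ite_le_ite_lt (one_lt_breakpoint n) continuous_const (by fun_prop)
    continuous_const (by ring) ?_
  field_simp; ring

theorem continuous_loadn (hn : 1 ≤ n) : Continuous (loadn n) := by
  have hN : (1 : ℝ) ≤ n := by exact_mod_cast hn
  refine continuous_ite_le_ite_lt (lt_add_of_pos_right 1 (by positivity)) continuous_const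
    (by fun_prop) continuous_const (by ring) ?_
  field_simp; ring

theorem hasDerivAt_thatn {s : ℝ} (hs : s ∉ ({1, 3 / 2 + 1 / (n : ℝ)} : Set ℝ)) :
    HasDerivAt (thatn n) (t'n n s) s := by
  simp only [mem_insert_iff, mem_singleton_iff, not_or] at hs
  have affine : HasDerivAt (fun x : ℝ => (2 * x + n) / (n + 2)) (2 / (n + 2)) s := by
    simpa using (((hasDerivAt_id s).const_mul 2).add_const (n : ℝ)).div_const ((n : ℝ) + 2)
  exact hasDerivAt_ite_le_ite_lt hs.1 hs.2 (hasDerivAt_id s) affine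
    ((hasDerivAt_id s).sub_const _)

theorem hasDerivAt_zhatn {s : ℝ} (hs : s ∉ ({1, 3 / 2 + 1 / (n : ℝ)} : Set ℝ)) :
    HasDerivAt (zhatn n) (z'n n s) s := by
  simp only [mem_insert_iff, mem_singleton_iff, not_or] at hs
  have affine : HasDerivAt (fun x : ℝ => (n / (n + 2)) * (x - 1)) (n / (n + 2)) s := by
    simpa using ((hasDerivAt_id s).sub_const 1).const_mul ((n : ℝ) / (n + 2))
  exact hasDerivAt_ite_le_ite_lt hs.1 hs.2 (hasDerivAt_const s 0) affine
    (hasDerivAt_const s (1 / 2))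

theorem t'n_nonneg (s : ℝ) : 0 ≤ t'n n s := by
  unfold t'n; split_ifs <;> positivity

theorem z'n_nonneg (s : ℝ) : 0 ≤ z'n n s := by
  unfold z'n; split_ifs <;> positivity

theorem t'n_add_z'n (s : ℝ) : t'n n s + z'n n s = 1 := by
  unfold t'n z'n; split_ifs
  · norm_num
  · field_simp; ring
  · norm_num

theorem measurable_t'n : Measurable (t'n n) :=
  measurable_const.ite measurableSet_Iic (measurable_const.ite measurableSet_Iio measurable_const)

theorem measurable_z'n : Measurable (z'n n) :=
  measurable_const.ite measurableSet_Iic (measurable_const.ite measurableSet_Iio measurable_const)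

theorem abs_t'n_le_one (s : ℝ) : |t'n n s| ≤ 1 := by
  rw [abs_of_nonneg (t'n_nonneg s), ← t'n_add_z'n s]
  linarith [z'n_nonneg (n := n) s]

theorem abs_z'n_le_one (s : ℝ) : |z'n n s| ≤ 1 := by
  rw [abs_of_nonneg (z'n_nonneg s), ← t'n_add_z'n s]
  linarith [t'n_nonneg (n := n) s]

theorem lipschitzWith_thatn (hn : 1 ≤ n) : LipschitzWith 1 (thatn n) :=
  lipschitzWith_of_hasDerivAt_off_countable (breakpoints_countable n) (continuous_thatn hn)
    (fun _ => hasDerivAt_thatn) measurable_t'n fun s => by exact_mod_cast abs_t'n_le_one s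

theorem lipschitzWith_zhatn (hn : 1 ≤ n) : LipschitzWith 1 (zhatn n) :=
  lipschitzWith_of_hasDerivAt_off_countable (breakpoints_countable n) (continuous_zhatn hn)
    (fun _ => hasDerivAt_zhatn) measurable_z'n fun s => by exact_mod_cast abs_z'n_le_one s

theorem lhatn_eq_zhatn (hn : 1 ≤ n) : lhatn n = zhatn n := by
  have hN : (1 : ℝ) ≤ n := by exact_mod_cast hn
  have hn0 : (0 : ℝ) < n := by linarith
  funext s
  unfold lhatn loadn thatn zhatn
  rcases le_or_gt s 1 with h1 | h1
  · simp [h1]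
  rcases lt_or_ge s (3 / 2 + 1 / n) with h2 | h2
  · have above : 1 < (2 * s + n) / (n + 2) := by
      rw [lt_div_iff₀ (by positivity)]; linarith
    have below : (2 * s + n) / (n + 2) < 1 + 1 / n := by
      rw [div_lt_iff₀ (by positivity)]
      have : (s - 3 / 2) * n < 1 := (lt_div_iff₀ hn0).1 (by linarith)
      field_simp
      nlinarith
    simp only [h1.not_ge, h2, above.not_ge, below, if_false, if_true]
    field_simp
    ring
  · have h3 : ¬ s - 1 / 2 ≤ 1 := by linarith [one_div_pos.2 hn0]
    have h4 : ¬ s - 1 / 2 < 1 + 1 / n := by linarith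
    simp only [h1.not_ge, h2.not_gt, h3, h4, if_false]

theorem dist1_drivingForce_eq_zero (hn : 1 ≤ n) (s : ℝ) :
    dist1 (-(zhatn n s - 1 - lhatn n s)) = 0 := by
  simp [lhatn_eq_zhatn hn, dist1]

theorem energy_balance (hn : 1 ≤ n) (s₁ s₂ : ℝ) :
    En1 (zhatn n s₂) +
        (∫ r in s₁..s₂, (|z'n n r| + |z'n n r| * dist1 (-(zhatn n r - 1 - lhatn n r)))) =
      En1 (zhatn n s₁) + ∫ r in s₁..s₂, lhatn n r * z'n n r := by
  have abs_z' : ∀ r, |z'n n r| = z'n n r := fun r => abs_of_nonneg (z'n_nonneg r)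
  have hz' : IntervalIntegrable (z'n n) volume s₁ s₂ :=
    intervalIntegrable_of_abs_le measurable_z'n abs_z'n_le_one s₁ s₂
  have chain := integral_sub_one_mul_eq_En1_sub (breakpoints_countable n) (continuous_zhatn hn)
    (fun _ => hasDerivAt_zhatn) hz'
  have split : ∫ r in s₁..s₂, (zhatn n r - 1) * z'n n r =
      (∫ r in s₁..s₂, zhatn n r * z'n n r) - ∫ r in s₁..s₂, z'n n r := by
    simp only [sub_mul, one_mul]
    exact intervalIntegral.integral_sub
      (hz'.continuousOn_mul (continuous_zhatn hn).continuousOn) hz'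
  simp only [dist1_drivingForce_eq_zero hn, mul_zero, add_zero, abs_z']
  rw [lhatn_eq_zhatn hn]
  linarith

theorem thatn_zero : thatn n 0 = 0 := by
  simp [thatn]

theorem thatn_five_halves (hn : 1 ≤ n) : thatn n (5 / 2) = 2 := by
  have hN : (1 : ℝ) ≤ n := by exact_mod_cast hn
  have : 1 / (n : ℝ) ≤ 1 := by rw [div_le_one (by linarith)]; exact hN
  unfold thatn
  rw [if_neg (by norm_num), if_neg (by linarith)]
  norm_num

theorem conds1d (hn : 1 ≤ n) :
    Conds1d 2 0 (5 / 2) (thatn n) (zhatn n) (lhatn n) (t'n n) (z'n n) where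
  deriv_t := ae_restrict_of_ae <| (breakpoints_countable n).ae_notMem volume |>.mono
    fun _ => hasDerivAt_thatn
  deriv_z := ae_restrict_of_ae <| (breakpoints_countable n).ae_notMem volume |>.mono
    fun _ => hasDerivAt_zhatn
  t_init := thatn_zero
  t_final := thatn_five_halves hn
  z_init := by simp [zhatn]
  c22 := Eventually.of_forall fun s =>
    ⟨t'n_nonneg s, by rw [dist1_drivingForce_eq_zero hn, mul_zero]⟩
  c23 := Eventually.of_forall fun s => by
    rw [dist1_drivingForce_eq_zero hn, mul_zero, add_zero, abs_of_nonneg (z'n_nonneg s),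
      t'n_add_z'n]
  c24 := fun s₁ s₂ _ _ _ => energy_balance hn s₁ s₂

theorem boundedVariationOn_lhatn (hn : 1 ≤ n) :
    BoundedVariationOn (lhatn n) (Icc 0 (5 / 2)) := by
  rw [lhatn_eq_zhatn hn]
  simpa using (lipschitzWith_zhatn hn).locallyBoundedVariationOn univ 0 (5 / 2) trivial trivial

theorem lhatn_piecewise (hn : 1 ≤ n) (s : ℝ) :
    (s ≤ 1 → lhatn n s = 0) ∧
      (1 < s → s < 3 / 2 + 1 / (n : ℝ) → lhatn n s = ((n : ℝ) / ((n : ℝ) + 2)) * (s - 1)) ∧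
      (3 / 2 + 1 / (n : ℝ) ≤ s → lhatn n s = 1 / 2) := by
  rw [lhatn_eq_zhatn hn]
  refine ⟨fun h1 => if_pos h1, fun h1 h2 => ?_, fun h2 => ?_⟩
  · simp only [zhatn, if_neg h1.not_ge, if_pos h2]
  · simp only [zhatn, if_neg ((one_lt_breakpoint n).trans_le h2).not_ge, if_neg h2.not_gt]

end FirstCounterexample

open FirstCounterexample in
/-- **Section 2.1.** `(5/2, t̂ₙ, ẑₙ, ℓ̂ₙ)` is a normalized p-parametrized BV solution
associated with `ℓₙ`: it satisfies (2.1)-(2.4) and the compatibility condition (2.5),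
and `ℓ̂ₙ = ℓₙ ∘ t̂ₙ` has the asserted piecewise form. -/
theorem first_counterexample_solutions (n : ℕ) (hn : 1 ≤ n) :
    (∃ L : ℝ≥0, LipschitzOnWith L (thatn n) (Icc 0 (5 / 2))) ∧
    (∃ L : ℝ≥0, LipschitzOnWith L (zhatn n) (Icc 0 (5 / 2))) ∧
    BoundedVariationOn (lhatn n) (Icc 0 (5 / 2)) ∧
    Conds1d 2 0 (5 / 2) (thatn n) (zhatn n) (lhatn n) (t'n n) (z'n n) ∧
    (∀ s : ℝ, (s ≤ 1 → lhatn n s = 0) ∧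
      (1 < s → s < 3 / 2 + 1 / (n : ℝ) → lhatn n s = ((n : ℝ) / ((n : ℝ) + 2)) * (s - 1)) ∧
      (3 / 2 + 1 / (n : ℝ) ≤ s → lhatn n s = 1 / 2)) ∧
    (∃ lL lR : ℝ → ℝ, OneSided1d 2 (loadn n) lL lR ∧
      Compat1d 2 (5 / 2) (thatn n) (lhatn n) (loadn n) lL lR) := by
  refine ⟨⟨1, (lipschitzWith_thatn hn).lipschitzOnWith⟩,
    ⟨1, (lipschitzWith_zhatn hn).lipschitzOnWith⟩, boundedVariationOn_lhatn hn, conds1d hn,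
    lhatn_piecewise hn, loadn n, loadn n, oneSided1d_of_continuous (continuous_loadn hn),
    compat1d_comp (by norm_num) (lipschitzWith_thatn hn).continuous.continuousOn thatn_zero
      (thatn_five_halves hn)⟩

end
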